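/- Let φ : X → ℝ be continuous, let λ > 0, let m be a finite Borel measure on X, and let C ⊆ X be a Borel set with m(C) > 0 such that underline-d_φ(y) < 1 − λ for every y ∈ C. Then for m-almost every x ∈ C and every δ > 0 there exist ν ∈ pw(x), an infinite set 𝔫 ⊆ ℕ, a constant c > 0, and Borel sets A_n ⊆ C for n ∈ 𝔫 with m(A_n) ≥ c/n², such that: (i) for every continuous f : X → ℝ, sup_{y∈A_n} |∫ f dμ_y^n − ∫ f dν| → 0 as 𝔫 ∋ n → ∞; and (ii) for every integer M ≥ 1 there exists n_M such that d_n(ℕ \ E^δ_{Φ_y}(M)) > λ for every n ∈ 𝔫 with n > n_M and every y ∈ A_n. -/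

import Mathlib

open MeasureTheory Filter Topology
open scoped ENNReal

noncomputable section

namespace SRB

/-- `d_n(E) = #(E ∩ [1,n]) / n`. -/
def densN (E : Set ℕ) (n : ℕ) : ℝ := (Nat.card ↥(E ∩ Set.Icc 1 n) : ℝ) / n

/-- upper asymptotic density -/
def upperDens (E : Set ℕ) : ℝ := Filter.atTop.limsup fun n => densN E n

/-- lower asymptotic density -/
def lowerDens (E : Set ℕ) : ℝ := Filter.atTop.liminf fun n => densN E n

/-- `E(M) = {k | k + m ∈ E for some 1 ≤ m ≤ M}`. -/
def EM (E : Set ℕ) (M : ℕ) : Set ℕ := {k | ∃ m, 1 ≤ m ∧ m ≤ M ∧ k + m ∈ E}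

/-- the set of `δ`-hyperbolic times of the sequence `a`. -/
def Ehyp (a : ℕ → ℝ) (δ : ℝ) : Set ℕ :=
  {p | 1 ≤ p ∧ ∀ k < p, ((p : ℝ) - k) * δ ≤ ∑ l ∈ Finset.Ico k p, a l}

/-- the set of `(δ,M)`-weakly hyperbolic times of the sequence `a`. -/
def Fweak (a : ℕ → ℝ) (δ : ℝ) (M : ℕ) : Set ℕ :=
  {p | 1 ≤ p ∧ ∀ k, p - M ≤ k → k < p → ((p : ℝ) - k) * δ ≤ ∑ l ∈ Finset.Ico k p, a l}

/-- the connected component (maximal interval of integers) of `p` in `S`. -/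
def component (S : Set ℕ) (p : ℕ) : Set ℕ :=
  {q | q ∈ S ∧ ∀ r, min p q ≤ r → r ≤ max p q → r ∈ S}

/-- the set of `(δ,M)`-mildly hyperbolic times of the sequence `a`. -/
def Gmild (a : ℕ → ℝ) (δ : ℝ) (M : ℕ) : Set ℕ :=
  {p | p ∈ EM (Fweak a δ M) M ∧
    ∀ k ∈ component (EM (Fweak a δ M) M) p, k < p →
      ((p : ℝ) - k) * (δ / 2) ≤ ∑ l ∈ Finset.Ico k p, a l}

variable {X : Type*} [MetricSpace X] [CompactSpace X] [MeasurableSpace X] [BorelSpace X]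

/-- the sequence `Φ_x = (φ(Tⁿ x))ₙ`. -/
def Phi (T : X ≃ₜ X) (φ : X → ℝ) (x : X) : ℕ → ℝ := fun n => φ ((⇑T)^[n] x)

/-- the Birkhoff sum `φ_n(x)`. -/
def birk (T : X ≃ₜ X) (φ : X → ℝ) (x : X) (n : ℕ) : ℝ := ∑ k ∈ Finset.range n, φ ((⇑T)^[k] x)

/-- `φ̄_*(x) = limsup_n φ_n(x)/n`. -/
def phiStar (T : X ≃ₜ X) (φ : X → ℝ) (x : X) : ℝ :=
  Filter.atTop.limsup fun n => birk T φ x n / n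

/-- the empirical measure `μ_x^n`. -/
def emp (T : X ≃ₜ X) (x : X) (n : ℕ) : Measure X :=
  (n : ℝ≥0∞)⁻¹ • ∑ k ∈ Finset.range n, Measure.dirac ((⇑T)^[k] x)

open scoped Classical in
/-- the empirical measure on a set of times, `μ_x^n[E]`. -/
def empOn (T : X ≃ₜ X) (x : X) (n : ℕ) (E : Set ℕ) : Measure X :=
  (n : ℝ≥0∞)⁻¹ • ∑ k ∈ Finset.range n, if k ∈ E then Measure.dirac ((⇑T)^[k] x) else 0

/-- weak-* convergence of a family of finite measures along a filter. -/
def WeakLim (L : Filter ℕ) (μs : ℕ → Measure X) (μ : Measure X) : Prop :=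
  ∀ f : C(X, ℝ), Tendsto (fun n => ∫ y, f y ∂(μs n)) L (𝓝 (∫ y, f y ∂μ))

/-- `pw(x)`: the set of weak-* limit points of the empirical measures `(μ_x^n)_{n ≥ 1}`. -/
def pw (T : X ≃ₜ X) (x : X) : Set (Measure X) :=
  {μ | IsProbabilityMeasure μ ∧ ∃ s : ℕ → ℕ, StrictMono s ∧ (∀ j, 1 ≤ s j) ∧
    ∀ f : C(X, ℝ), Tendsto (fun j => ∫ y, f y ∂(emp T x (s j))) atTop (𝓝 (∫ y, f y ∂μ))}

/-- `underline-d_φ(x) = lim_{δ→0⁺} lim_{M→∞} d̲(E^δ_{Φ_x}(M))`; both limits being monotone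
they equal the supremum. -/
def lowerDphi (T : X ≃ₜ X) (φ : X → ℝ) (x : X) : ℝ :=
  ⨆ δ : Set.Ioi (0 : ℝ), ⨆ M : ℕ, lowerDens (EM (Ehyp (Phi T φ x) δ.1) M)

/-- `d̄⁺ = lim_{δ→0⁺} limsup_M d̄(F_a^{δ,M}(M))`. -/
def upDplus (a : ℕ → ℝ) : ℝ :=
  ⨆ δ : Set.Ioi (0 : ℝ), Filter.atTop.limsup fun M => upperDens (EM (Fweak a δ.1 M) M)

/-- `d̄⁻ = lim_{δ→0⁺} liminf_M d̄(F_a^{δ,M}(M))`. -/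
def upDminus (a : ℕ → ℝ) : ℝ :=
  ⨆ δ : Set.Ioi (0 : ℝ), Filter.atTop.liminf fun M => upperDens (EM (Fweak a δ.1 M) M)

/-- static entropy of a measure w.r.t. the finite partition given by the fibers of `q`. -/
def Hstat {ι : Type*} [Fintype ι] (μ : Measure X) (q : X → ι) : ℝ :=
  -∑ i : ι, (μ (q ⁻¹' {i})).toReal * Real.log (μ (q ⁻¹' {i})).toReal

/-- the iterated partition `P^F` as a coding map. -/
def codeIter (T : X ≃ₜ X) {ι : Type*} (p : X → ι) (F : Finset ℕ) : X → (F → ι) :=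
  fun x k => p ((⇑T)^[(k : ℕ)] x)

end SRB

namespace SRB


section Auxiliary

set_option linter.unusedSectionVars false
set_option linter.unnecessarySimpa false
set_option linter.unusedVariables false
set_option maxHeartbeats 1000000

lemma abs_sub_lt_of_floor_mul_eq {c a b : ℝ} (hc : 0 < c) (h : ⌊c*a⌋ = ⌊c*b⌋) :
    |a - b| < 1/c := by
  have h1 := Int.floor_le (c*a)
  have h2 := Int.lt_floor_add_one (c*a)
  have h3 := Int.floor_le (c*b)
  have h4 := Int.lt_floor_add_one (c*b)
  rw [h] at h1 h2
  rw [abs_sub_lt_iff]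
  constructor
  · rw [← sub_lt_iff_lt_add'] at h2
    rw [lt_div_iff₀ hc]
    nlinarith
  · rw [lt_div_iff₀ hc]
    nlinarith

lemma tsum_inv_sq_ne_top : (∑' n : ℕ, ENNReal.ofReal (1/(n:ℝ)^2)) ≠ ∞ := by
  have hsum : Summable (fun n : ℕ => 1/(n:ℝ)^2) := by
    simpa using Real.summable_one_div_nat_pow.2 one_lt_two
  rw [← ENNReal.ofReal_tsum_of_nonneg (fun n => by positivity) hsum]
  exact ENNReal.ofReal_ne_top


variable {X : Type*} [MetricSpace X] [CompactSpace X] [MeasurableSpace X] [BorelSpace X]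

lemma integrable_cm (f : C(X, ℝ)) (μ : Measure X) [IsFiniteMeasure μ] :
    Integrable (fun x => f x) μ := by
  exact BoundedContinuousFunction.integrable μ (BoundedContinuousFunction.mkOfCompact f)

lemma abs_integral_le (f : C(X, ℝ)) (μ : Measure X) [IsProbabilityMeasure μ] :
    |∫ x, f x ∂μ| ≤ ‖f‖ := by
  have := norm_integral_le_of_norm_le_const (μ := μ) (f := fun x => f x) (C := ‖f‖)
    (Eventually.of_forall fun x => f.norm_coe_le_norm x)
  simpa using this

lemma abs_integral_sub_le (f g : C(X, ℝ)) (μ : Measure X) [IsProbabilityMeasure μ] :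
    |∫ x, f x ∂μ - ∫ x, g x ∂μ| ≤ dist f g := by
  rw [← integral_sub (integrable_cm f μ) (integrable_cm g μ)]
  have : |∫ x, (f - g : C(X,ℝ)) x ∂μ| ≤ ‖f - g‖ := abs_integral_le (f - g) μ
  simpa [dist_eq_norm, ContinuousMap.sub_apply] using this

/-- test functions for a compact set -/
def testsOf (K : TopologicalSpace.Compacts X) : Set C(X, ℝ) :=
  {f | (∀ x, f x ∈ Set.Icc (0:ℝ) 1) ∧ ∀ x ∈ K, f x = 1}

lemma one_mem_testsOf (K : TopologicalSpace.Compacts X) : (1 : C(X,ℝ)) ∈ testsOf K :=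
  ⟨fun x => by simp, fun x _ => rfl⟩

/-- the inf defining the content, as a real number -/
def lam0 (L : C(X,ℝ) → ℝ) (K : TopologicalSpace.Compacts X) : ℝ := sInf (L '' testsOf K)

section content

variable (L : C(X, ℝ) → ℝ)
  (Lmono : ∀ f g : C(X,ℝ), (∀ x, f x ≤ g x) → L f ≤ L g)
  (Ladd : ∀ f g : C(X,ℝ), L (f + g) = L f + L g)
  (Lone : L 1 = 1) (Lzero : L 0 = 0)

lemma testsOf_nonempty (K : TopologicalSpace.Compacts X) :
    (L '' testsOf K).Nonempty := ⟨L 1, 1, one_mem_testsOf K, rfl⟩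

include Lmono Lzero in
lemma L_nonneg_of_mem {K : TopologicalSpace.Compacts X} {f : C(X,ℝ)} (hf : f ∈ testsOf K) :
    0 ≤ L f := by
  have := Lmono 0 f (fun x => by simpa using (hf.1 x).1)
  simpa [Lzero] using this

include Lmono Lzero in
lemma testsOf_bddBelow (K : TopologicalSpace.Compacts X) :
    BddBelow (L '' testsOf K) := by
  refine ⟨0, ?_⟩
  rintro r ⟨f, hf, rfl⟩
  exact L_nonneg_of_mem L Lmono Lzero hf

include Lmono Lzero in
lemma lam0_nonneg (K : TopologicalSpace.Compacts X) : 0 ≤ lam0 L K :=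
  le_csInf (testsOf_nonempty L K) (by rintro r ⟨f, hf, rfl⟩; exact L_nonneg_of_mem L Lmono Lzero hf)

include Lmono Lzero in
lemma lam0_le {K : TopologicalSpace.Compacts X} {f : C(X,ℝ)} (hf : f ∈ testsOf K) :
    lam0 L K ≤ L f :=
  csInf_le (testsOf_bddBelow L Lmono Lzero K) ⟨f, hf, rfl⟩

include Lmono Lzero Lone in
lemma lam0_le_one (K : TopologicalSpace.Compacts X) : lam0 L K ≤ 1 := by
  simpa [Lone] using lam0_le L Lmono Lzero (one_mem_testsOf K)

include Lmono Ladd Lzero in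
lemma lam0_sup_le (K₁ K₂ : TopologicalSpace.Compacts X) :
    lam0 L (K₁ ⊔ K₂) ≤ lam0 L K₁ + lam0 L K₂ := by
  apply le_of_forall_pos_le_add
  intro ε hε
  obtain ⟨r₁, ⟨f₁, hf₁, rfl⟩, h₁⟩ := exists_lt_of_csInf_lt (testsOf_nonempty L K₁)
    (lt_add_of_pos_right (lam0 L K₁) (half_pos hε))
  obtain ⟨r₂, ⟨f₂, hf₂, rfl⟩, h₂⟩ := exists_lt_of_csInf_lt (testsOf_nonempty L K₂)
    (lt_add_of_pos_right (lam0 L K₂) (half_pos hε))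
  have hmem : (f₁ + f₂) ⊓ 1 ∈ testsOf (K₁ ⊔ K₂) := by
    constructor
    · intro x
      refine ⟨le_inf (add_nonneg (hf₁.1 x).1 (hf₂.1 x).1) zero_le_one, ?_⟩
      exact inf_le_right.trans le_rfl
    · rintro x (hx | hx)
      · have : (1:ℝ) ≤ f₁ x + f₂ x := by
          have := (hf₂.1 x).1; rw [hf₁.2 x hx] at *; linarith
        simpa using min_eq_right this
      · have : (1:ℝ) ≤ f₁ x + f₂ x := by
          have := (hf₁.1 x).1; rw [hf₂.2 x hx] at *; linarith
        simpa using min_eq_right this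
  have hle : lam0 L (K₁ ⊔ K₂) ≤ L ((f₁ + f₂) ⊓ 1) := lam0_le L Lmono Lzero hmem
  have hmle : L ((f₁ + f₂) ⊓ 1) ≤ L (f₁ + f₂) := Lmono _ _ (fun x => by
    simpa using inf_le_left)
  rw [Ladd] at hmle
  linarith

include Lmono Ladd Lzero in
lemma lam0_sup_disjoint (K₁ K₂ : TopologicalSpace.Compacts X)
    (hd : Disjoint (K₁ : Set X) K₂) :
    lam0 L K₁ + lam0 L K₂ ≤ lam0 L (K₁ ⊔ K₂) := by
  apply le_csInf (testsOf_nonempty L _)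
  rintro r ⟨f, hf, rfl⟩
  obtain ⟨u, hu0, hu1, huI⟩ := exists_continuous_zero_one_of_isClosed
    K₂.isCompact.isClosed K₁.isCompact.isClosed hd.symm
  have h₁ : f * u ∈ testsOf K₁ := by
    constructor
    · intro x
      exact ⟨mul_nonneg (hf.1 x).1 (huI x).1, mul_le_one₀ (hf.1 x).2 (huI x).1 (huI x).2⟩
    · intro x hx
      have : u x = 1 := hu1 hx
      simp [ContinuousMap.mul_apply, this, hf.2 x (Or.inl hx)]
  have h₂ : f * (1 - u) ∈ testsOf K₂ := by
    constructor
    · intro x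
      refine ⟨mul_nonneg (hf.1 x).1 (by
        simp only [ContinuousMap.sub_apply, ContinuousMap.one_apply]
        linarith [(huI x).2]), ?_⟩
      have h1u : (1:ℝ) - u x ≤ 1 := by linarith [(huI x).1]
      simp only [ContinuousMap.mul_apply, ContinuousMap.sub_apply, ContinuousMap.one_apply]
      calc f x * (1 - u x) ≤ 1 * 1 := by
            apply mul_le_mul (hf.1 x).2 h1u (by linarith [(huI x).2]) zero_le_one
        _ = 1 := one_mul 1
    · intro x hx
      have : u x = 0 := hu0 hx
      simp [ContinuousMap.mul_apply, ContinuousMap.sub_apply, this, hf.2 x (Or.inr hx)]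
  have hsum : f * u + f * (1 - u) = f := by
    ext x; simp [ContinuousMap.mul_apply, ContinuousMap.sub_apply]; ring
  have hadd := Ladd (f * u) (f * (1 - u))
  rw [hsum] at hadd
  have e1 := lam0_le L Lmono Lzero h₁
  have e2 := lam0_le L Lmono Lzero h₂
  linarith

/-- the Riesz content associated to `L`. -/
def rContent : MeasureTheory.Content X where
  toFun K := (lam0 L K).toNNReal
  mono' K₁ K₂ h := by
    apply Real.toNNReal_mono
    apply le_csInf (testsOf_nonempty L K₂)
    rintro r ⟨f, hf, rfl⟩
    exact lam0_le L Lmono Lzero ⟨hf.1, fun x hx => hf.2 x (h hx)⟩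
  sup_disjoint' K₁ K₂ hd _ _ := by
    apply le_antisymm
    · rw [← Real.toNNReal_add (lam0_nonneg L Lmono Lzero K₁) (lam0_nonneg L Lmono Lzero K₂)]
      exact Real.toNNReal_mono (lam0_sup_le L Lmono Ladd Lzero K₁ K₂)
    · rw [← Real.toNNReal_add (lam0_nonneg L Lmono Lzero K₁) (lam0_nonneg L Lmono Lzero K₂)]
      exact Real.toNNReal_mono (lam0_sup_disjoint L Lmono Ladd Lzero K₁ K₂ hd)
  sup_le' K₁ K₂ := by
    rw [← Real.toNNReal_add (lam0_nonneg L Lmono Lzero K₁) (lam0_nonneg L Lmono Lzero K₂)]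
    exact Real.toNNReal_mono (lam0_sup_le L Lmono Ladd Lzero K₁ K₂)

include Lmono Lzero Lone in
lemma rContent_measure_univ :
    (rContent L Lmono Ladd Lzero).measure Set.univ = 1 := by
  set rC := rContent L Lmono Ladd Lzero with hrCdef
  have hrC : ∀ K, rC.toFun K = (lam0 L K).toNNReal := fun K => rfl
  rw [rC.measure_apply MeasurableSet.univ, rC.outerMeasure_of_isOpen Set.univ isOpen_univ]
  apply le_antisymm
  · apply iSup₂_le
    intro K hK
    have h1 : rC K ≤ rC ⟨Set.univ, isCompact_univ⟩ := rC.mono _ _ (Set.subset_univ _)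
    have h2 : rC ⟨Set.univ, isCompact_univ⟩ ≤ 1 := by
      rw [show rC ⟨Set.univ, isCompact_univ⟩ = (rC.toFun ⟨Set.univ, isCompact_univ⟩ : ℝ≥0∞) from rfl, hrC]
      exact_mod_cast Real.toNNReal_le_one.2 (lam0_le_one L Lmono Lone Lzero _)
    exact h1.trans h2
  · have h : lam0 L (⟨Set.univ, isCompact_univ⟩ : TopologicalSpace.Compacts X) = 1 := by
      have him : L '' testsOf (⟨Set.univ, isCompact_univ⟩ : TopologicalSpace.Compacts X)
          = {1} := by
        apply le_antisymm
        · rintro r ⟨f, hf, rfl⟩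
          have : f = 1 := ContinuousMap.ext fun x => hf.2 x trivial
          simp [this, Lone]
        · rintro r rfl
          exact ⟨1, one_mem_testsOf _, Lone⟩
      rw [lam0, him, csInf_singleton]
    refine le_trans ?_ (MeasureTheory.Content.le_innerContent rC
      ⟨Set.univ, isCompact_univ⟩ ⟨Set.univ, isOpen_univ⟩ (Set.subset_univ _))
    show (1:ℝ≥0∞) ≤ (rC.toFun _ : ℝ≥0∞)
    rw [hrC, h]
    simp

end content

section weaklim

variable (μs : ℕ → Measure X) [hm : ∀ j, IsProbabilityMeasure (μs j)]

include hm in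
lemma measure_open_le_liminf (L : C(X, ℝ) → ℝ) (rC : MeasureTheory.Content X)
    (hrC : ∀ K, rC.toFun K = (lam0 L K).toNNReal)
    (hL : ∀ f : C(X, ℝ), Tendsto (fun j => ∫ x, f x ∂(μs j)) atTop (𝓝 (L f)))
    {G : Set X} (hG : IsOpen G) :
    rC.measure G ≤ atTop.liminf (fun j => μs j G) := by
  rw [rC.measure_apply hG.measurableSet, rC.outerMeasure_of_isOpen G hG]
  apply iSup₂_le
  intro K hK
  obtain ⟨u, hu0, hu1, huI⟩ := exists_continuous_zero_one_of_isClosed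
    (isClosed_compl_iff.2 hG) K.isCompact.isClosed
    (Set.disjoint_left.2 fun x hx hxK => hx (hK hxK))
  have humem : u ∈ testsOf K := ⟨huI, fun x hx => hu1 hx⟩
  have step1 : (rC K : ℝ≥0∞) ≤ ENNReal.ofReal (L u) := by
    rw [show rC K = (rC.toFun K : ℝ≥0∞) from rfl, hrC, ENNReal.ofReal]
    refine ENNReal.coe_le_coe.2 (Real.toNNReal_mono ?_)
    exact csInf_le ⟨0, by
      rintro r ⟨f, hf, rfl⟩
      have h0f : ∀ x, (0:ℝ) ≤ f x := fun x => (hf.1 x).1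
      exact ge_of_tendsto' (hL f) fun j => integral_nonneg h0f⟩ ⟨u, humem, rfl⟩
  refine step1.trans ?_
  have h2 : atTop.liminf (fun j => ENNReal.ofReal (∫ x, u x ∂(μs j))) = ENNReal.ofReal (L u) :=
    ((ENNReal.continuous_ofReal.tendsto _).comp (hL u)).liminf_eq
  rw [← h2]
  refine Filter.liminf_le_liminf ?_ (by isBoundedDefault) (by isBoundedDefault)
  apply Eventually.of_forall
  intro j
  have hint : ∫ x, u x ∂(μs j) ≤ (μs j G).toReal := by
    have hind : Integrable (G.indicator (fun _ => (1:ℝ))) (μs j) :=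
      (integrable_const (1:ℝ)).indicator hG.measurableSet
    have hmono : ∀ x, u x ≤ G.indicator (fun _ => (1:ℝ)) x := by
      intro x
      by_cases hx : x ∈ G
      · simp [hx, (huI x).2]
      · simp [hx, (hu0 hx : u x = 0)]
    calc ∫ x, u x ∂(μs j) ≤ ∫ x, G.indicator (fun _ => (1:ℝ)) x ∂(μs j) :=
          integral_mono (integrable_cm u (μs j)) hind hmono
      _ = (μs j G).toReal := by
          exact integral_indicator_one (μ := μs j) hG.measurableSet
  calc ENNReal.ofReal (∫ x, u x ∂(μs j)) ≤ ENNReal.ofReal (μs j G).toReal :=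
        ENNReal.ofReal_le_ofReal hint
    _ = μs j G := ENNReal.ofReal_toReal (measure_ne_top _ _)

include hm in
lemma final_convergence (ν : Measure X) (hprob : IsProbabilityMeasure ν)
    (hopen : ∀ {G : Set X}, IsOpen G → ν G ≤ atTop.liminf (fun j => μs j G)) (f : C(X, ℝ)) :
    Tendsto (fun j => ∫ x, f x ∂(μs j)) atTop (𝓝 (∫ x, f x ∂ν)) := by
  set P : ℕ → ProbabilityMeasure X := fun j => ⟨μs j, hm j⟩ with hP
  set Pν : ProbabilityMeasure X := ⟨ν, hprob⟩ with hPν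
  have h_opens : ∀ G : Set X, IsOpen G → Pν G ≤ atTop.liminf (fun j => P j G) := by
    intro G hG
    have hEnn := hopen hG
    have aux : (ENNReal.ofNNReal (atTop.liminf fun i => P i G)) =
        atTop.liminf ((ENNReal.ofNNReal) ∘ fun i => P i G) := by
      refine Monotone.map_liminf_of_continuousAt (F := atTop) ENNReal.coe_mono (fun i => P i G)
        ENNReal.continuous_coe.continuousAt ?_ ⟨0, by simp⟩
      exact IsBoundedUnder.isCoboundedUnder_ge ⟨1, by
        simp only [eventually_map, eventually_atTop]
        exact ⟨0, fun j _ => ProbabilityMeasure.apply_le_one _ _⟩⟩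
    rw [← ENNReal.coe_le_coe, aux]
    have e1 : atTop.liminf ((ENNReal.ofNNReal) ∘ fun i => P i G) = atTop.liminf fun i => μs i G := by
      congr 1
      funext i
      simp [hP, ProbabilityMeasure.ennreal_coeFn_eq_coeFn_toMeasure]
    rw [e1]
    have e2 : (Pν G : ℝ≥0∞) = ν G := ProbabilityMeasure.ennreal_coeFn_eq_coeFn_toMeasure _ _
    rw [e2]
    exact hEnn
  have htend : Tendsto P atTop (𝓝 Pν) := tendsto_of_forall_isOpen_le_liminf h_opens
  have := ProbabilityMeasure.tendsto_iff_forall_integral_tendsto.1 htend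
    (BoundedContinuousFunction.mkOfCompact f)
  exact this

include hm in
/-- Existence of a weak-* limit point of a sequence of probability measures on
a compact metric space. -/
lemma exists_subseq_weak_lim :
    ∃ φ : ℕ → ℕ, StrictMono φ ∧ ∃ ν : Measure X, IsProbabilityMeasure ν ∧
      ∀ f : C(X, ℝ), Tendsto (fun j => ∫ x, f x ∂(μs (φ j))) atTop (𝓝 (∫ x, f x ∂ν)) := by
  have hne : Nonempty X := by
    by_contra hX
    have h0 : (μs 0) Set.univ = 1 := measure_univ
    rw [Set.univ_eq_empty_iff.2 (not_nonempty_iff.1 hX), measure_empty] at h0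
    exact zero_ne_one h0
  obtain ⟨g, hg⟩ := TopologicalSpace.exists_dense_seq C(X, ℝ)
  set F : ℕ → ℕ → ℝ := fun j k => ∫ x, g k x ∂(μs j) with hF
  have hFS : ∀ j, F j ∈ Set.univ.pi fun k => Set.Icc (-‖g k‖) ‖g k‖ := by
    intro j k _
    exact abs_le.1 (abs_integral_le (g k) (μs j))
  obtain ⟨ℓ, -, φ, hφ, hconv⟩ :=
    (isCompact_univ_pi fun k => isCompact_Icc).tendsto_subseq hFS
  have hk : ∀ k, Tendsto (fun j => F (φ j) k) atTop (𝓝 (ℓ k)) := fun k =>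
    (tendsto_pi_nhds.1 hconv) k
  refine ⟨φ, hφ, ?_⟩
  have hcauchy : ∀ f : C(X, ℝ), ∃ c, Tendsto (fun j => ∫ x, f x ∂(μs (φ j))) atTop (𝓝 c) := by
    intro f
    apply cauchySeq_tendsto_of_complete
    rw [Metric.cauchySeq_iff]
    intro ε hε
    obtain ⟨k, hkf⟩ := Metric.denseRange_iff.1 hg f (ε / 3) (by positivity)
    have hck : CauchySeq fun j => F (φ j) k := (hk k).cauchySeq
    rw [Metric.cauchySeq_iff] at hck
    obtain ⟨N, hN⟩ := hck (ε / 3) (by positivity)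
    refine ⟨N, fun a ha b hb => ?_⟩
    have h1 : dist (∫ x, f x ∂(μs (φ a))) (F (φ a) k) ≤ ε / 3 := by
      rw [Real.dist_eq]
      exact (abs_integral_sub_le f (g k) (μs (φ a))).trans hkf.le
    have h2 : dist (∫ x, f x ∂(μs (φ b))) (F (φ b) k) ≤ ε / 3 := by
      rw [Real.dist_eq]
      exact (abs_integral_sub_le f (g k) (μs (φ b))).trans hkf.le
    have h3 := hN a ha b hb
    calc dist (∫ x, f x ∂(μs (φ a))) (∫ x, f x ∂(μs (φ b)))
        ≤ dist (∫ x, f x ∂(μs (φ a))) (F (φ a) k) + dist (F (φ a) k) (F (φ b) k)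
            + dist (F (φ b) k) (∫ x, f x ∂(μs (φ b))) := dist_triangle4 _ _ _ _
      _ < ε := by
          have h2' : dist (F (φ b) k) (∫ x, f x ∂(μs (φ b))) ≤ ε / 3 := by
            rw [dist_comm]; exact h2
          linarith
  choose L hL using hcauchy
  -- properties of L
  have Lzero : L 0 = 0 := by
    refine tendsto_nhds_unique (hL 0) ?_
    simpa using (tendsto_const_nhds : Tendsto (fun _ : ℕ => (0:ℝ)) atTop (𝓝 0))
  have Lone : L 1 = 1 := by
    refine tendsto_nhds_unique (hL 1) ?_
    have : ∀ j, ∫ x, (1 : C(X,ℝ)) x ∂(μs (φ j)) = 1 := by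
      intro j
      simp
    simp only [this]
    exact tendsto_const_nhds
  have Lmono : ∀ f g : C(X,ℝ), (∀ x, f x ≤ g x) → L f ≤ L g := by
    intro f g' hfg
    refine le_of_tendsto_of_tendsto' (hL f) (hL g') fun j =>
      integral_mono (integrable_cm f _) (integrable_cm g' _) hfg
  have Ladd : ∀ f g : C(X,ℝ), L (f + g) = L f + L g := by
    intro f g'
    refine tendsto_nhds_unique (hL (f + g')) ?_
    have : ∀ j, ∫ x, (f + g' : C(X,ℝ)) x ∂(μs (φ j))
        = (∫ x, f x ∂(μs (φ j))) + ∫ x, g' x ∂(μs (φ j)) := by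
      intro j
      simp only [ContinuousMap.add_apply]
      exact integral_add (integrable_cm f _) (integrable_cm g' _)
    simp only [this]
    exact (hL f).add (hL g')
  set rC := rContent L Lmono Ladd Lzero with hrCdef
  have hprob : IsProbabilityMeasure rC.measure :=
    ⟨rContent_measure_univ L Lmono Ladd Lone Lzero⟩
  refine ⟨rC.measure, hprob, ?_⟩
  intro f
  exact final_convergence (fun j => μs (φ j)) rC.measure hprob
    (fun {G} hG => measure_open_le_liminf (fun j => μs (φ j)) L rC (fun K => rfl) hL hG) f


end weaklim

open Classical in
lemma card_inter_Icc_eq (E : Set ℕ) (n : ℕ) :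
    (Nat.card ↥(E ∩ Set.Icc 1 n) : ℝ) = ((Finset.Icc 1 n).filter (· ∈ E)).card := by
  rw [Nat.card_coe_set_eq]
  have h : E ∩ Set.Icc 1 n = ↑((Finset.Icc 1 n).filter (· ∈ E)) := by
    ext k
    simp only [Set.mem_inter_iff, Set.mem_Icc, Finset.coe_filter, Finset.mem_Icc,
      Set.mem_setOf_eq]
    tauto
  rw [h, Set.ncard_coe_finset]

lemma densN_nonneg (E : Set ℕ) (n : ℕ) : 0 ≤ densN E n := by
  unfold densN; positivity

lemma densN_le_one (E : Set ℕ) (n : ℕ) : densN E n ≤ 1 := by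
  classical
  rcases Nat.eq_zero_or_pos n with rfl | hn
  · simp [densN]
  · unfold densN
    rw [card_inter_Icc_eq]
    rw [div_le_one (by exact_mod_cast hn)]
    have := Finset.card_filter_le (Finset.Icc 1 n) (· ∈ E)
    have hcard : (Finset.Icc 1 n).card = n := by simp
    exact_mod_cast this.trans_eq hcard

lemma densN_mono {E E' : Set ℕ} (h : E ⊆ E') (n : ℕ) : densN E n ≤ densN E' n := by
  unfold densN
  gcongr
  · exact Nat.card_mono ((Set.finite_Icc 1 n).inter_of_right E')
      (Set.inter_subset_inter_left _ h)

lemma densN_compl {E : Set ℕ} {n : ℕ} (hn : 1 ≤ n) : densN Eᶜ n = 1 - densN E n := by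
  classical
  unfold densN
  rw [Nat.card_coe_set_eq, Nat.card_coe_set_eq]
  have hfin1 : (E ∩ Set.Icc 1 n).Finite := (Set.finite_Icc 1 n).inter_of_right _
  have hfin2 : (Eᶜ ∩ Set.Icc 1 n).Finite := (Set.finite_Icc 1 n).inter_of_right _
  have hdisj : Disjoint (E ∩ Set.Icc 1 n) (Eᶜ ∩ Set.Icc 1 n) := by
    apply Set.disjoint_left.2
    rintro k ⟨hk, -⟩ ⟨hk', -⟩
    exact hk' hk
  have hunion : (E ∩ Set.Icc 1 n) ∪ (Eᶜ ∩ Set.Icc 1 n) = Set.Icc 1 n := by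
    ext k
    by_cases hk : k ∈ E <;> simp [hk]
  have hkey : (E ∩ Set.Icc 1 n).ncard + (Eᶜ ∩ Set.Icc 1 n).ncard = n := by
    rw [← Set.ncard_union_eq hdisj hfin1 hfin2, hunion]
    rw [← Nat.card_coe_set_eq (Set.Icc 1 n)]
    simp [Nat.card_eq_finsetCard]
  have hle : (E ∩ Set.Icc 1 n).ncard ≤ n := by omega
  have h3 : (Eᶜ ∩ Set.Icc 1 n).ncard = n - (E ∩ Set.Icc 1 n).ncard := by omega
  have hne : (n:ℝ) ≠ 0 := by positivity
  rw [h3, Nat.cast_sub hle]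
  field_simp

lemma EM_mono_set {E E' : Set ℕ} (h : E ⊆ E') (M : ℕ) : EM E M ⊆ EM E' M := by
  rintro k ⟨m, h1, h2, h3⟩; exact ⟨m, h1, h2, h h3⟩

lemma EM_mono_M (E : Set ℕ) {M M' : ℕ} (h : M ≤ M') : EM E M ⊆ EM E M' := by
  rintro k ⟨m, h1, h2, h3⟩; exact ⟨m, h1, h2.trans h, h3⟩

lemma Ehyp_anti (a : ℕ → ℝ) {q δ : ℝ} (hq : 0 < q) (h : q ≤ δ) : Ehyp a δ ⊆ Ehyp a q := by
  rintro p ⟨h1, h2⟩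
  refine ⟨h1, fun k hk => le_trans ?_ (h2 k hk)⟩
  have hpk : (0:ℝ) ≤ (p:ℝ) - k := by
    have : (k:ℝ) < p := by exact_mod_cast hk
    linarith
  exact mul_le_mul_of_nonneg_left h hpk

/-- the empirical Birkhoff average as an explicit sum -/
def empAvg (T : X ≃ₜ X) (f : C(X, ℝ)) (n : ℕ) (y : X) : ℝ :=
  (n:ℝ)⁻¹ * ∑ k ∈ Finset.range n, f ((⇑T)^[k] y)

lemma continuous_empAvg (T : X ≃ₜ X) (f : C(X, ℝ)) (n : ℕ) :
    Continuous fun y => empAvg T f n y := by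
  apply Continuous.mul continuous_const
  exact continuous_finset_sum _ fun k _ => f.continuous.comp (T.continuous.iterate k)

lemma emp_integral (T : X ≃ₜ X) (f : C(X, ℝ)) (n : ℕ) (y : X) :
    ∫ z, f z ∂(emp T y n) = empAvg T f n y := by
  rcases Nat.eq_zero_or_pos n with rfl | hn
  · simp [emp, empAvg]
  unfold emp empAvg
  rw [integral_smul_measure]
  rw [integral_finset_sum_measure (fun k _ => integrable_cm f _)]
  have h1 : ∀ k ∈ Finset.range n, ∫ z, f z ∂(Measure.dirac ((⇑T)^[k] y)) = f ((⇑T)^[k] y) :=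
    fun k _ => integral_dirac _ _
  rw [Finset.sum_congr rfl h1]
  have h2 : ((n : ℝ≥0∞)⁻¹).toReal = (n:ℝ)⁻¹ := by
    rw [ENNReal.toReal_inv]
    simp
  rw [h2, smul_eq_mul]

lemma emp_prob (T : X ≃ₜ X) (y : X) {n : ℕ} (hn : 1 ≤ n) :
    IsProbabilityMeasure (emp T y n) := by
  constructor
  unfold emp
  rw [Measure.smul_apply]
  rw [Measure.finset_sum_apply]
  have : ∀ k ∈ Finset.range n, (Measure.dirac ((⇑T)^[k] y)) Set.univ = 1 := by
    intro k _
    simp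
  rw [Finset.sum_congr rfl this]
  simp only [Finset.sum_const, Finset.card_range, nsmul_eq_mul, mul_one, smul_eq_mul]
  rw [ENNReal.inv_mul_cancel (by exact_mod_cast Nat.one_le_iff_ne_zero.mp hn)
    (ENNReal.natCast_ne_top n)]

lemma abs_empAvg_le (T : X ≃ₜ X) (f : C(X, ℝ)) (n : ℕ) (y : X) :
    |empAvg T f n y| ≤ ‖f‖ := by
  rcases Nat.eq_zero_or_pos n with rfl | hn
  · simp [empAvg]
  · rw [← emp_integral]
    have := emp_prob T y hn
    exact abs_integral_le f (emp T y n)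

-- measurability of the density condition set
lemma measurable_EhypSet (T : X ≃ₜ X) (φ : X → ℝ) (hφ : Continuous φ) (q : ℝ) (p : ℕ) :
    MeasurableSet {y : X | p ∈ Ehyp (Phi T φ y) q} := by
  have : {y : X | p ∈ Ehyp (Phi T φ y) q}
      = {y : X | 1 ≤ p} ∩ ⋂ k ∈ Set.Iio p, {y : X | ((p:ℝ) - k) * q
          ≤ ∑ l ∈ Finset.Ico k p, φ ((⇑T)^[l] y)} := by
    ext y
    simp only [Ehyp, Phi, Set.mem_setOf_eq, Set.mem_inter_iff, Set.mem_iInter, Set.mem_Iio]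
  rw [this]
  apply MeasurableSet.inter
  · rcases Nat.eq_zero_or_pos p with rfl | hp
    · have h0 : {y : X | 1 ≤ (0:ℕ)} = ∅ := by ext y; simp
      rw [h0]; exact MeasurableSet.empty
    · have h0 : {y : X | 1 ≤ p} = Set.univ := by
        ext y
        simp only [Set.mem_setOf_eq, Set.mem_univ, iff_true]
        omega
      rw [h0]; exact MeasurableSet.univ
  · apply MeasurableSet.biInter (Set.to_countable _)
    intro k _
    apply measurableSet_le measurable_const
    exact (continuous_finset_sum _ fun l _ => hφ.comp (T.continuous.iterate l)).measurable

lemma measurable_densN_set (T : X ≃ₜ X) (φ : X → ℝ) (hφ : Continuous φ)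
    (q : ℝ) (M n : ℕ) (c : ℝ) :
    MeasurableSet {y : X | densN (EM (Ehyp (Phi T φ y) q) M) n < c} := by
  classical
  have hmem : ∀ k, MeasurableSet {y : X | k ∈ EM (Ehyp (Phi T φ y) q) M} := by
    intro k
    have : {y : X | k ∈ EM (Ehyp (Phi T φ y) q) M}
        = ⋃ m ∈ Set.Icc 1 M, {y : X | k + m ∈ Ehyp (Phi T φ y) q} := by
      ext y
      simp only [EM, Set.mem_setOf_eq, Set.mem_iUnion, Set.mem_Icc]
      tauto
    rw [this]
    exact MeasurableSet.biUnion (Set.to_countable _)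
      (fun m _ => measurable_EhypSet T φ hφ q (k + m))
  have hfun : Measurable fun y => densN (EM (Ehyp (Phi T φ y) q) M) n := by
    have heq : ∀ y, densN (EM (Ehyp (Phi T φ y) q) M) n
        = ((∑ k ∈ Finset.Icc 1 n,
            if k ∈ EM (Ehyp (Phi T φ y) q) M then (1:ℕ) else 0 : ℕ) : ℝ) / n := by
      intro y
      unfold densN
      rw [card_inter_Icc_eq]
      congr 2
      rw [Finset.card_filter]
    simp only [heq]
    apply Measurable.div_const
    apply Measurable.comp (measurable_from_top (f := fun k : ℕ => (k:ℝ)))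
    apply Finset.measurable_sum
    intro k _
    exact Measurable.ite (hmem k) measurable_const measurable_const
  exact measurableSet_lt hfun measurable_const


lemma light_bound {ι : Type*} [DecidableEq ι] (m : Measure X) (S : Set X) (Ψ : X → ι)
    (ι₀ : Finset ι) (hr : ∀ y, Ψ y ∈ ι₀) (ε : ℝ≥0∞) :
    m {y | y ∈ S ∧ m (S ∩ Ψ ⁻¹' {Ψ y}) < ε} ≤ ι₀.card * ε := by
  classical
  have hsub : {y | y ∈ S ∧ m (S ∩ Ψ ⁻¹' {Ψ y}) < ε} ⊆
      ⋃ v ∈ ι₀.filter (fun v => m (S ∩ Ψ ⁻¹' {v}) < ε), (S ∩ Ψ ⁻¹' {v}) := by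
    rintro y ⟨hyS, hym⟩
    exact Set.mem_biUnion (Finset.mem_coe.2 (Finset.mem_filter.2 ⟨hr y, hym⟩)) ⟨hyS, rfl⟩
  refine (measure_mono hsub).trans ?_
  refine (measure_biUnion_finset_le _ _).trans ?_
  calc ∑ v ∈ ι₀.filter (fun v => m (S ∩ Ψ ⁻¹' {v}) < ε), m (S ∩ Ψ ⁻¹' {v})
      ≤ ∑ v ∈ ι₀.filter (fun v => m (S ∩ Ψ ⁻¹' {v}) < ε), ε :=
        Finset.sum_le_sum fun v hv => (Finset.mem_filter.1 hv).2.le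
    _ = (ι₀.filter (fun v => m (S ∩ Ψ ⁻¹' {v}) < ε)).card * ε := by
        rw [Finset.sum_const, nsmul_eq_mul]
    _ ≤ ι₀.card * ε := by
        gcongr
        exact Finset.filter_subset _ _


/- new defs -/

/-- the basic density-condition sets -/
def Sset (T : X ≃ₜ X) (φ : X → ℝ) (lam : ℝ) (C : Set X) (q : ℝ) (i n : ℕ) : Set X :=
  C ∩ {y | densN (EM (Ehyp (Phi T φ y) q) (i+1)) n < 1 - lam}

/-- the discretized empirical-integral vector -/
def Psi (T : X ≃ₜ X) (g : ℕ → C(X, ℝ)) (i n : ℕ) : X → (Fin (i+1) → ℤ) :=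
  fun y k => ⌊((i:ℝ)+1) * empAvg T (g k) n y⌋

/-- candidate sets -/
def Acand (T : X ≃ₜ X) (φ : X → ℝ) (lam : ℝ) (C : Set X) (g : ℕ → C(X, ℝ))
    (q : ℝ) (i n : ℕ) (x : X) : Set X :=
  Sset T φ lam C q i n ∩ (Psi T g i n) ⁻¹' {Psi T g i n x}

/-- the set of good times at stage `i` for `x` -/
def GoodSet (T : X ≃ₜ X) (φ : X → ℝ) (lam : ℝ) (m : Measure X) (C : Set X) (g : ℕ → C(X, ℝ))
    (q : ℝ) (i : ℕ) (x : X) : Set ℕ :=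
  {n | x ∈ Sset T φ lam C q i n ∧
    ENNReal.ofReal (1/(n:ℝ)^2) ≤ m (Acand T φ lam C g q i n x)}

/-- bounding box for `Psi` -/
def boxI (g : ℕ → C(X, ℝ)) (i : ℕ) : Finset (Fin (i+1) → ℤ) :=
  Fintype.piFinset fun k => Finset.Icc (-(⌈((i:ℝ)+1) * ‖g (k:ℕ)‖⌉)) ⌈((i:ℝ)+1) * ‖g (k:ℕ)‖⌉

lemma Psi_mem_boxI (T : X ≃ₜ X) (g : ℕ → C(X, ℝ)) (i n : ℕ) (y : X) :
    Psi T g i n y ∈ boxI g i := by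
  rw [boxI, Fintype.mem_piFinset]
  intro k
  rw [Finset.mem_Icc]
  have hc : (0:ℝ) < (i:ℝ)+1 := by positivity
  have hb := abs_le.1 (abs_empAvg_le T (g k) n y)
  constructor
  · have h1 : -(((i:ℝ)+1) * ‖g (k:ℕ)‖) ≤ ((i:ℝ)+1) * empAvg T (g k) n y := by
      rw [neg_le]
      calc -(((i:ℝ)+1) * empAvg T (g k) n y) = ((i:ℝ)+1) * (-(empAvg T (g k) n y)) := by ring
        _ ≤ ((i:ℝ)+1) * ‖g (k:ℕ)‖ := by
            apply mul_le_mul_of_nonneg_left _ hc.le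
            linarith [hb.1]
    calc -(⌈((i:ℝ)+1) * ‖g (k:ℕ)‖⌉) = ⌊-(((i:ℝ)+1) * ‖g (k:ℕ)‖)⌋ := by
          rw [Int.floor_neg]
      _ ≤ Psi T g i n y k := Int.floor_mono h1
  · refine le_trans (Int.floor_mono ?_) (Int.floor_le_ceil _)
    exact mul_le_mul_of_nonneg_left hb.2 hc.le

lemma measurable_Psi_fiber (T : X ≃ₜ X) (g : ℕ → C(X, ℝ)) (i n : ℕ) (v : Fin (i+1) → ℤ) :
    MeasurableSet ((Psi T g i n) ⁻¹' {v}) := by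
  have hm : Measurable (Psi T g i n) := by
    apply measurable_pi_lambda
    intro k
    exact (measurable_const.mul (continuous_empAvg T (g k) n).measurable).floor
  exact hm (measurableSet_singleton v)

lemma measurable_Sset (T : X ≃ₜ X) (φ : X → ℝ) (hφ : Continuous φ) (lam : ℝ) (C : Set X)
    (hC : MeasurableSet C) (q : ℝ) (i n : ℕ) :
    MeasurableSet (Sset T φ lam C q i n) :=
  hC.inter (measurable_densN_set T φ hφ q (i+1) n (1 - lam))

lemma lowerDens_le_one' (E : Set ℕ) : lowerDens E ≤ 1 := by
  have h := Filter.liminf_le_liminf (f := (atTop : Filter ℕ))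
    (u := fun n => densN E n) (v := fun _ : ℕ => (1:ℝ))
    (Eventually.of_forall fun n => densN_le_one E n)
    ⟨0, by
      simp only [eventually_map, eventually_atTop]
      exact ⟨0, fun n _ => densN_nonneg E n⟩⟩
    (IsBoundedUnder.isCoboundedUnder_ge ⟨1, by simp⟩)
  simpa [lowerDens, Filter.liminf_const] using h

lemma lowerDens_le_lowerDphi (T : X ≃ₜ X) (φ : X → ℝ) (x : X) {q : ℝ} (hq : 0 < q) (M : ℕ) :
    lowerDens (EM (Ehyp (Phi T φ x) q) M) ≤ lowerDphi T φ x := by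
  have h1 : lowerDens (EM (Ehyp (Phi T φ x) q) M)
      ≤ ⨆ M' : ℕ, lowerDens (EM (Ehyp (Phi T φ x) q) M') :=
    le_ciSup (f := fun M' : ℕ => lowerDens (EM (Ehyp (Phi T φ x) q) M'))
      ⟨1, by rintro r ⟨M', rfl⟩; exact lowerDens_le_one' _⟩ M
  refine h1.trans ?_
  exact le_ciSup (f := fun δ : Set.Ioi (0:ℝ) =>
    ⨆ M' : ℕ, lowerDens (EM (Ehyp (Phi T φ x) δ.1) M'))
    ⟨1, by rintro r ⟨δ, rfl⟩; exact ciSup_le fun M' => lowerDens_le_one' _⟩ ⟨q, hq⟩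

lemma Sx_infinite (T : X ≃ₜ X) (φ : X → ℝ) (lam : ℝ) (C : Set X) {x : X} (hxC : x ∈ C)
    (hx : lowerDphi T φ x < 1 - lam) {q : ℝ} (hq : 0 < q) (i n : ℕ) :
    {n | x ∈ Sset T φ lam C q i n}.Infinite := by
  have h1 : lowerDens (EM (Ehyp (Phi T φ x) q) (i+1)) < 1 - lam :=
    lt_of_le_of_lt (lowerDens_le_lowerDphi T φ x hq (i+1)) hx
  have h2 : ∃ᶠ n in atTop, densN (EM (Ehyp (Phi T φ x) q) (i+1)) n < 1 - lam := by
    apply Filter.frequently_lt_of_liminf_lt _ h1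
    exact IsBoundedUnder.isCoboundedUnder_ge ⟨1, by
      simp only [eventually_map, eventually_atTop]
      exact ⟨0, fun n _ => densN_le_one _ n⟩⟩
  have h3 := Nat.frequently_atTop_iff_infinite.1 h2
  apply h3.mono
  intro n hn
  exact ⟨hxC, hn⟩

/-- The key a.e. lemma: almost every `x ∈ C` has infinitely many good times at every stage. -/
lemma good_infinite_ae (T : X ≃ₜ X) (φ : X → ℝ) (hφ : Continuous φ) (lam : ℝ)
    (m : Measure X) [IsFiniteMeasure m] (C : Set X) (hC : MeasurableSet C)
    (hCd : ∀ y ∈ C, lowerDphi T φ y < 1 - lam) (g : ℕ → C(X, ℝ))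
    (q : ℝ) (hq : 0 < q) (i : ℕ) :
    ∀ᵐ x ∂(m.restrict C), (GoodSet T φ lam m C g q i x).Infinite := by
  classical
  set ε : ℕ → ℝ≥0∞ := fun n => ENNReal.ofReal (1/(n:ℝ)^2) with hε
  set K : ℕ := (boxI g i).card with hK
  set Light : ℕ → Set X := fun n =>
    {y | y ∈ Sset T φ lam C q i n ∧
      m (Sset T φ lam C q i n ∩ (Psi T g i n) ⁻¹' {Psi T g i n y}) < ε n} with hLight
  have hLightle : ∀ n, m (Light n) ≤ K * ε n := fun n =>
    light_bound m (Sset T φ lam C q i n) (Psi T g i n) (boxI g i)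
      (fun y => Psi_mem_boxI T g i n y) (ε n)
  set Z : Set X := ⋂ N : ℕ, ⋃ n ∈ {n : ℕ | N ≤ n}, Light n with hZ
  have hZ0 : m Z = 0 := by
    have hle : ∀ N : ℕ, m Z ≤ K * ∑' (b : {x : ℕ // x ∉ Finset.range N}), ε b := by
      intro N
      have h1 : Z ⊆ ⋃ (b : {x : ℕ // x ∉ Finset.range N}), Light b := by
        intro x hx
        rw [hZ] at hx
        have := Set.mem_iInter.1 hx N
        obtain ⟨n, hn, hxn⟩ := Set.mem_iUnion₂.1 this
        exact Set.mem_iUnion.2 ⟨⟨n, by simpa using hn⟩, hxn⟩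
      calc m Z ≤ m (⋃ (b : {x : ℕ // x ∉ Finset.range N}), Light b) := measure_mono h1
        _ ≤ ∑' (b : {x : ℕ // x ∉ Finset.range N}), m (Light b) := measure_iUnion_le _
        _ ≤ ∑' (b : {x : ℕ // x ∉ Finset.range N}), (K : ℝ≥0∞) * ε b :=
            ENNReal.tsum_le_tsum fun b => hLightle b
        _ = K * ∑' (b : {x : ℕ // x ∉ Finset.range N}), ε b := by rw [ENNReal.tsum_mul_left]
    have htail : Tendsto (fun N : ℕ => (K : ℝ≥0∞) * ∑' (b : {x : ℕ // x ∉ Finset.range N}), ε b)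
        atTop (𝓝 0) := by
      have h0 := ENNReal.tendsto_tsum_compl_atTop_zero (f := ε) (by
        rw [hε]; exact tsum_inv_sq_ne_top)
      have h1 := h0.comp tendsto_finset_range
      have h2 : Tendsto (fun N : ℕ => (K : ℝ≥0∞) *
          ∑' (b : {x : ℕ // x ∉ Finset.range N}), ε b) atTop (𝓝 ((K : ℝ≥0∞) * 0)) :=
        ENNReal.Tendsto.const_mul h1 (Or.inr (ENNReal.natCast_ne_top K))
      simpa using h2
    have := ge_of_tendsto' htail hle
    exact le_antisymm this zero_le
  have hsub : {x | x ∈ C ∧ ¬ (GoodSet T φ lam m C g q i x).Infinite} ⊆ Z := by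
    rintro x ⟨hxC, hfin⟩
    have hGf : (GoodSet T φ lam m C g q i x).Finite := Set.not_infinite.1 hfin
    obtain ⟨N₀, hN₀⟩ := hGf.bddAbove
    have hSx := Sx_infinite T φ lam C hxC (hCd x hxC) hq i 0
    rw [hZ]
    apply Set.mem_iInter.2
    intro N
    obtain ⟨n, hnS, hngt⟩ := hSx.exists_gt (max N N₀)
    have hnN : N ≤ n := le_trans (le_max_left _ _) hngt.le
    have hnG : n ∉ GoodSet T φ lam m C g q i x := by
      intro hmem
      exact absurd (hN₀ hmem) (by
        have := lt_of_le_of_lt (le_max_right N N₀) hngt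
        omega)
    have hxS : x ∈ Sset T φ lam C q i n := hnS
    have hlt : m (Acand T φ lam C g q i n x) < ε n := by
      by_contra hge
      exact hnG ⟨hxS, not_lt.1 hge⟩
    apply Set.mem_biUnion hnN
    exact ⟨hxS, hlt⟩
  have hm0 : m {x | x ∈ C ∧ ¬ (GoodSet T φ lam m C g q i x).Infinite} = 0 :=
    measure_mono_null hsub hZ0
  have hr0 : (m.restrict C) {x | x ∈ C ∧ ¬ (GoodSet T φ lam m C g q i x).Infinite} = 0 :=
    le_antisymm (le_trans (Measure.le_iff'.1 Measure.restrict_le_self _) hm0.le) zero_le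
  have h1 : ∀ᵐ x ∂(m.restrict C), x ∈ C := ae_restrict_mem hC
  have h2 : ∀ᵐ x ∂(m.restrict C), ¬ (x ∈ C ∧ ¬ (GoodSet T φ lam m C g q i x).Infinite) :=
    (ae_iff).2 (by simpa using hr0)
  filter_upwards [h1, h2] with x hx1 hx2
  by_contra hcon
  exact hx2 ⟨hx1, hcon⟩


end Auxiliary

/-- if `underline-d_φ < 1 − λ` on a Borel set `C` of positive `m`-measure, then
for `m`-a.e. `x ∈ C` and every `δ > 0` there are `ν ∈ pw(x)`, an infinite set `𝔫 ⊆ ℕ`,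
`c > 0` and Borel sets `A_n ⊆ C` (`n ∈ 𝔫`) with `m(A_n) ≥ c/n²`, such that
(i) `sup_{y∈A_n} |∫ f dμ_y^n − ∫ f dν| → 0` along `𝔫` for every continuous `f`, and
(ii) for every `M ≥ 1` there is `n_M` with `d_n(ℕ \ E^δ_{Φ_y}(M)) > λ` for all
`𝔫 ∋ n > n_M` and all `y ∈ A_n`. -/
theorem statement17 {X : Type*} [MetricSpace X] [CompactSpace X]
    [MeasurableSpace X] [BorelSpace X] (T : X ≃ₜ X)
    (φ : X → ℝ) (hφ : Continuous φ) (lam : ℝ) (hlam : 0 < lam)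
    (m : Measure X) [IsFiniteMeasure m]
    (C : Set X) (hC : MeasurableSet C) (hCpos : 0 < m C)
    (hCd : ∀ y ∈ C, lowerDphi T φ y < 1 - lam) :
    ∀ᵐ x ∂(m.restrict C), ∀ δ : ℝ, 0 < δ →
      ∃ ν ∈ pw T x, ∃ 𝔫 : Set ℕ, 𝔫.Infinite ∧ ∃ c : ℝ, 0 < c ∧ ∃ A : ℕ → Set X,
        (∀ n ∈ 𝔫, MeasurableSet (A n) ∧ A n ⊆ C ∧
          ENNReal.ofReal (c / (n : ℝ) ^ 2) ≤ m (A n)) ∧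
        (∀ f : C(X, ℝ),
          Tendsto (fun n => ⨆ y ∈ A n, |∫ z, f z ∂(emp T y n) - ∫ z, f z ∂ν|)
            (atTop ⊓ 𝓟 𝔫) (𝓝 0)) ∧
        (∀ M : ℕ, 1 ≤ M → ∃ nM : ℕ, ∀ n ∈ 𝔫, nM < n → ∀ y ∈ A n,
          lam < densN ((EM (Ehyp (Phi T φ y) δ) M)ᶜ) n) := by
  classical
  obtain ⟨g, hg⟩ := TopologicalSpace.exists_dense_seq C(X, ℝ)
  have hae : ∀ᵐ x ∂(m.restrict C), ∀ (q : ℚ) (i : ℕ), 0 < (q:ℝ) →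
      (GoodSet T φ lam m C g (q:ℝ) i x).Infinite := by
    rw [ae_all_iff]
    intro q
    rw [ae_all_iff]
    intro i
    by_cases hq : 0 < (q:ℝ)
    · filter_upwards [good_infinite_ae T φ hφ lam m C hC hCd g (q:ℝ) hq i] with x hx _
      exact hx
    · filter_upwards with x hq'
      exact absurd hq' hq
  filter_upwards [hae] with x hx
  intro δ hδ
  obtain ⟨q, hq0, hqδ⟩ := exists_rat_btwn hδ
  have hGood : ∀ i, (GoodSet T φ lam m C g (q:ℝ) i x).Infinite := fun i => hx q i hq0
  have hstep : ∀ (i prev : ℕ), ∃ n, n ∈ GoodSet T φ lam m C g (q:ℝ) i x ∧ prev < n := by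
    intro i prev
    obtain ⟨n, hn, hlt⟩ := (hGood i).exists_gt prev
    exact ⟨n, hn, hlt⟩
  choose step hstepG hstepLt using hstep
  let nn : ℕ → ℕ := fun i => Nat.rec (step 0 0) (fun i prev => step (i+1) prev) i
  have hnnG : ∀ i, nn i ∈ GoodSet T φ lam m C g (q:ℝ) i x := by
    intro i
    cases i with
    | zero => exact hstepG 0 0
    | succ i => exact hstepG (i+1) (nn i)
  have hnnmono : StrictMono nn := strictMono_nat_of_lt_succ fun i => hstepLt (i+1) (nn i)
  have hnnpos : ∀ i, 1 ≤ nn i := by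
    intro i
    have h0 : 0 < nn 0 := hstepLt 0 0
    exact h0.trans_le (hnnmono.monotone (Nat.zero_le i))
  haveI hpm : ∀ j : ℕ, IsProbabilityMeasure (emp T x (nn j)) := fun j => emp_prob T x (hnnpos j)
  obtain ⟨σ, hσ, ν, hν, hconv⟩ := exists_subseq_weak_lim (fun j => emp T x (nn j))
  have hsmono : StrictMono (fun j => nn (σ j)) := hnnmono.comp hσ
  have hs1 : ∀ j, 1 ≤ nn (σ j) := fun j => hnnpos _
  set A : ℕ → Set X := fun n' => ⋃ j ∈ {j : ℕ | nn (σ j) = n'},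
    Acand T φ lam C g (q:ℝ) (σ j) n' x with hA
  have hA_mem : ∀ (j : ℕ) (y : X), y ∈ A (nn (σ j)) →
      y ∈ Acand T φ lam C g (q:ℝ) (σ j) (nn (σ j)) x := by
    intro j y hy
    rw [hA] at hy
    obtain ⟨j', hj', hy'⟩ := Set.mem_iUnion₂.1 hy
    have hj'2 : j' = j := hsmono.injective hj'
    rw [hj'2] at hy'
    exact hy'
  refine ⟨ν, ⟨hν, (fun j => nn (σ j)), hsmono, hs1, hconv⟩,
    Set.range (fun j => nn (σ j)), Set.infinite_range_of_injective hsmono.injective,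
    1, one_pos, A, ?_, ?_, ?_⟩
  · rintro n' ⟨j, rfl⟩
    refine ⟨?_, ?_, ?_⟩
    · rw [hA]
      apply MeasurableSet.biUnion (Set.countable_univ.mono (Set.subset_univ _))
      intro j' _
      exact (measurable_Sset T φ hφ lam C hC (q:ℝ) (σ j') (nn (σ j))).inter
        (measurable_Psi_fiber T g (σ j') (nn (σ j)) _)
    · rw [hA]
      apply Set.iUnion₂_subset
      intro j' _
      exact fun y hy => hy.1.1
    · rw [hA]
      refine le_trans (hnnG (σ j)).2 (measure_mono ?_)
      exact Set.subset_biUnion_of_mem (u := fun j' =>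
        Acand T φ lam C g (q:ℝ) (σ j') (nn (σ j)) x)
        (show nn (σ j) = nn (σ j) from rfl)
  · intro fc
    rw [Metric.tendsto_nhds]
    intro ε hε
    rw [Filter.eventually_inf_principal]
    obtain ⟨k, hk⟩ := Metric.denseRange_iff.1 hg fc (ε/8) (by positivity)
    obtain ⟨J₁, hJ₁⟩ := Metric.tendsto_atTop.1 (hconv fc) (ε/8) (by positivity)
    obtain ⟨N8, hN8⟩ := exists_nat_gt (8/ε)
    set J : ℕ := max J₁ (max k N8) with hJ
    rw [Filter.eventually_atTop]
    refine ⟨nn (σ J), ?_⟩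
    intro n' hn'N hn'mem
    obtain ⟨j, rfl⟩ := hn'mem
    have hjJ : J ≤ j := hsmono.le_iff_le.1 hn'N
    have hjk : k ≤ σ j :=
      le_trans (le_trans (le_max_left k N8) (le_max_right J₁ _)) (hjJ.trans hσ.le_apply)
    have hkey : ∀ y ∈ A (nn (σ j)),
        |∫ z, fc z ∂(emp T y (nn (σ j))) - ∫ z, fc z ∂ν| ≤ ε/2 := by
      intro y hy
      have hyA := hA_mem j y hy
      haveI : IsProbabilityMeasure (emp T y (nn (σ j))) := emp_prob T y (hs1 j)
      haveI : IsProbabilityMeasure (emp T x (nn (σ j))) := emp_prob T x (hs1 j)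
      have hfib : Psi T g (σ j) (nn (σ j)) y = Psi T g (σ j) (nn (σ j)) x := hyA.2
      have hklt : k < σ j + 1 := Nat.lt_succ_of_le hjk
      have hco := congrFun hfib ⟨k, hklt⟩
      have hc : (0:ℝ) < (σ j : ℝ) + 1 := by positivity
      have hmid : |empAvg T (g k) (nn (σ j)) y - empAvg T (g k) (nn (σ j)) x|
          < 1/((σ j : ℝ)+1) := abs_sub_lt_of_floor_mul_eq hc hco
      have hmid2 : 1/((σ j : ℝ)+1) ≤ ε/8 := by
        have hjN8 : (N8 : ℝ) ≤ (σ j : ℝ) + 1 := by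
          have hN8le : N8 ≤ σ j := le_trans (le_trans (le_max_right k N8) (le_max_right J₁ _))
            (hjJ.trans hσ.le_apply)
          have := Nat.le_succ_of_le hN8le
          exact_mod_cast this
        have h8 : 8 < ε * ((σ j : ℝ) + 1) := by
          rw [div_lt_iff₀ hε] at hN8
          nlinarith
        rw [div_le_div_iff₀ hc (by norm_num : (0:ℝ) < 8)]
        linarith
      have t1 : |∫ z, fc z ∂(emp T y (nn (σ j))) - ∫ z, (g k) z ∂(emp T y (nn (σ j)))| ≤ ε/8 :=
        le_trans (abs_integral_sub_le fc (g k) _) hk.le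
      have t2 : |∫ z, (g k) z ∂(emp T y (nn (σ j))) - ∫ z, (g k) z ∂(emp T x (nn (σ j)))|
          ≤ ε/8 := by
        rw [emp_integral T (g k) _ y, emp_integral T (g k) _ x]
        exact le_trans hmid.le hmid2
      have t3 : |∫ z, (g k) z ∂(emp T x (nn (σ j))) - ∫ z, fc z ∂(emp T x (nn (σ j)))| ≤ ε/8 := by
        rw [abs_sub_comm]
        exact le_trans (abs_integral_sub_le fc (g k) _) hk.le
      have t4 : |∫ z, fc z ∂(emp T x (nn (σ j))) - ∫ z, fc z ∂ν| ≤ ε/8 := by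
        have := hJ₁ j (le_trans (le_max_left J₁ _) hjJ)
        rw [Real.dist_eq] at this
        exact this.le
      have tr1 := abs_sub_le (∫ z, fc z ∂(emp T y (nn (σ j))))
        (∫ z, (g k) z ∂(emp T y (nn (σ j)))) (∫ z, fc z ∂ν)
      have tr2 := abs_sub_le (∫ z, (g k) z ∂(emp T y (nn (σ j))))
        (∫ z, (g k) z ∂(emp T x (nn (σ j)))) (∫ z, fc z ∂ν)
      have tr3 := abs_sub_le (∫ z, (g k) z ∂(emp T x (nn (σ j))))
        (∫ z, fc z ∂(emp T x (nn (σ j)))) (∫ z, fc z ∂ν)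
      linarith
    have hsup_le : (⨆ y ∈ A (nn (σ j)),
        |∫ z, fc z ∂(emp T y (nn (σ j))) - ∫ z, fc z ∂ν|) ≤ ε/2 :=
      Real.iSup_le (fun y => Real.iSup_le (fun hy => hkey y hy) (by positivity)) (by positivity)
    have hsup_nonneg : 0 ≤ ⨆ y ∈ A (nn (σ j)),
        |∫ z, fc z ∂(emp T y (nn (σ j))) - ∫ z, fc z ∂ν| :=
      Real.iSup_nonneg fun y => Real.iSup_nonneg fun _ => abs_nonneg _
    rw [Real.dist_eq, sub_zero, abs_of_nonneg hsup_nonneg]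
    linarith
  · intro M hM
    refine ⟨nn (σ M), ?_⟩
    rintro n' ⟨j, rfl⟩ hgt y hy
    have hjM : M < j := hsmono.lt_iff_lt.1 hgt
    have hyA := hA_mem j y hy
    have hyS : densN (EM (Ehyp (Phi T φ y) (q:ℝ)) (σ j + 1)) (nn (σ j)) < 1 - lam := hyA.1.2
    have hsub : EM (Ehyp (Phi T φ y) δ) M ⊆ EM (Ehyp (Phi T φ y) (q:ℝ)) (σ j + 1) := by
      refine Set.Subset.trans (EM_mono_set (Ehyp_anti (Phi T φ y) hq0 hqδ.le) M) ?_
      apply EM_mono_M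
      have hMσ : M ≤ σ j := le_trans hjM.le hσ.le_apply
      omega
    have hd : densN (EM (Ehyp (Phi T φ y) δ) M) (nn (σ j)) < 1 - lam :=
      lt_of_le_of_lt (densN_mono hsub _) hyS
    rw [densN_compl (hs1 j)]
    linarith

end SRB
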